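/- For each i ∈ {1,…,7}, the image of the open rectangle int(Σᵢ) × (1+√2, ∞) under F̂ is the product of (-∞, 1+√2) with the open interval γ[int(Σ_{j(i)})] ⊆ (1+√2, ∞), where j(i) is determined by νᵢ[Σ₀] = Σ_{j(i)} (explicitly j(i) = i for i ≠ 2, 6, j(2) = 6 and j(6) = 2); in particular these seven images are pairwise disjoint, F̂ is injective on each of these rectangles, and the complement of the union of the seven images inside (-∞, 1+√2) × (1+√2, ∞) is a Lebesgue-null set. -/

import Mathlib

/-!
Each `γ·νᵢ` acts as `γ ∘ νᵢ`. For `i ≤ 6`, `νᵢ` is a hyperbola `u ↦ e + k / (u - p)` whose pole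
`p` is an endpoint of `Σᵢ`, so it is monotone on each side of `p` and maps `int Σᵢ` onto `Σ₀` and
`Σ₀` onto `int Σ_{j(i)}`; `ν₇` is `u ↦ -u`. Since `γ[u] = 2 + 2√2 - u` is the reflection swapping
`Σ₀` and `(-∞, 1+√2)`, `F̂` acts on each rectangle as a product of injective maps with the stated
images. The sectors are disjoint because `sectorIndex` tells them apart, and their interiors cover
`(-∞, 1+√2)` up to the finitely many endpoints; `γ` transports both facts to the second factor.
-/
open MeasureTheory Set

noncomputable section

/-- The linear fractional transformation of `ℝ` induced by a 2×2 real matrix,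
with the convention that the value is `0` when the denominator vanishes. -/
def mob (M : Matrix (Fin 2) (Fin 2) ℝ) (u : ℝ) : ℝ :=
  (M 0 0 * u + M 0 1) / (M 1 0 * u + M 1 1)

/-- The matrix `γ = [[-1, 2+2√2],[0,1]]`. -/
def gam : Matrix (Fin 2) (Fin 2) ℝ := !![-1, 2 + 2 * Real.sqrt 2; 0, 1]

/-- The isometries `ν₁, …, ν₇` of the octagon. -/
def nu : ℕ → Matrix (Fin 2) (Fin 2) ℝ
  | 1 => (Real.sqrt 2)⁻¹ • !![1, 1; 1, -1]
  | 2 => (Real.sqrt 2)⁻¹ • !![1, 1; -1, 1]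
  | 3 => !![0, 1; 1, 0]
  | 4 => !![0, 1; -1, 0]
  | 5 => (Real.sqrt 2)⁻¹ • !![-1, 1; 1, 1]
  | 6 => (Real.sqrt 2)⁻¹ • !![-1, 1; -1, -1]
  | 7 => !![-1, 0; 0, 1]
  | _ => 1

/-- The index `i` of the sector `Σᵢ` (in inverse-slope coordinates) containing `u`:
`Σ₀ = (1+√2, ∞)`, `Σ₁ = (1, 1+√2]`, `Σ₂ = (√2-1, 1]`, `Σ₃ = (0, √2-1]`, `Σ₄ = (1-√2, 0]`,
`Σ₅ = (-1, 1-√2]`, `Σ₆ = (-1-√2, -1]`, `Σ₇ = (-∞, -1-√2]`. -/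
def sectorIndex (u : ℝ) : ℕ :=
  if 1 + Real.sqrt 2 < u then 0
  else if 1 < u then 1
  else if Real.sqrt 2 - 1 < u then 2
  else if 0 < u then 3
  else if 1 - Real.sqrt 2 < u then 4
  else if -1 < u then 5
  else if -(1 + Real.sqrt 2) < u then 6
  else 7

/-- The octagon Farey map in inverse-slope coordinates: `F(u) = (γ·νᵢ)[u]` for `u ∈ Σᵢ`
(`i = 1,…,7`), and `F(u) = u` for `u ∈ Σ₀`. -/
def F (u : ℝ) : ℝ :=
  if sectorIndex u = 0 then u else mob (gam * nu (sectorIndex u)) u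

/-- The natural extension of the octagon Farey map. -/
def Fhat (p : ℝ × ℝ) : ℝ × ℝ :=
  if sectorIndex p.1 = 0 then p
  else (mob (gam * nu (sectorIndex p.1)) p.1, mob (gam * nu (sectorIndex p.1)) p.2)

/-- The interiors of the sectors `Σ₁, …, Σ₇`. -/
def sInt : ℕ → Set ℝ
  | 1 => Set.Ioo 1 (1 + Real.sqrt 2)
  | 2 => Set.Ioo (Real.sqrt 2 - 1) 1
  | 3 => Set.Ioo 0 (Real.sqrt 2 - 1)
  | 4 => Set.Ioo (1 - Real.sqrt 2) 0
  | 5 => Set.Ioo (-1) (1 - Real.sqrt 2)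
  | 6 => Set.Ioo (-(1 + Real.sqrt 2)) (-1)
  | 7 => Set.Iio (-(1 + Real.sqrt 2))
  | _ => ∅

/-- The index `j(i)` determined by `νᵢ[Σ₀] = Σ_{j(i)}`: `j(i) = i` for `i ≠ 2, 6`,
`j(2) = 6` and `j(6) = 2`. -/
def jmap (i : ℕ) : ℕ := if i = 2 then 6 else if i = 6 then 2 else i

open Real

lemma mob_of (a b c d u : ℝ) : mob !![a, b; c, d] u = (a * u + b) / (c * u + d) := rfl

lemma mob_smul {c : ℝ} (hc : c ≠ 0) (M : Matrix (Fin 2) (Fin 2) ℝ) (u : ℝ) :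
    mob (c • M) u = mob M u := by
  simp only [mob, Matrix.smul_apply, smul_eq_mul, mul_assoc, ← mul_add]
  exact mul_div_mul_left _ _ hc

/-- No condition on `M` is needed: if `M` has a pole at `mob N u`, both sides are the junk value
`0`. -/
lemma mob_mul {M N : Matrix (Fin 2) (Fin 2) ℝ} {u : ℝ} (hN : N 1 0 * u + N 1 1 ≠ 0) :
    mob (M * N) u = mob M (mob N u) := by
  simp only [mob, Matrix.mul_apply, Fin.sum_univ_two]
  rw [← mul_div_mul_left _ (M 1 0 * ((N 0 0 * u + N 0 1) / (N 1 0 * u + N 1 1)) + M 1 1) hN]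
  congr 1 <;> field_simp <;> ring

section Hyperbola

lemma image_div_Ioo_zero {k a : ℝ} (hk : 0 < k) (ha : 0 < a) :
    (k / ·) '' Ioo 0 a = Ioi (k / a) := by
  simp_rw [div_eq_mul_inv]
  rw [← image_image (k * ·) Inv.inv, image_inv_eq_inv, inv_Ioo_0_left ha, image_mul_left_Ioi hk]

lemma image_div_Ioi {k a : ℝ} (hk : 0 < k) (ha : 0 < a) :
    (k / ·) '' Ioi a = Ioo 0 (k / a) := by
  simp_rw [div_eq_mul_inv]
  rw [← image_image (k * ·) Inv.inv, image_inv_eq_inv, inv_Ioi₀ ha, image_mul_left_Ioo hk, mul_zero]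

variable {e k p q b : ℝ}

lemma injOn_hyperbola (hk : k ≠ 0) : InjOn (fun u => e + k / (u - p)) {p}ᶜ := by
  intro u hu v hv huv
  have h : k / (u - p) = k / (v - p) := add_left_cancel huv
  rw [div_eq_div_iff (sub_ne_zero.2 hu) (sub_ne_zero.2 hv)] at h
  linarith [mul_left_cancel₀ hk h]

lemma image_hyperbola_Ioo_of_pos (hk : 0 < k) (hpq : p < q) (hb : k = (b - e) * (q - p)) :
    (fun u => e + k / (u - p)) '' Ioo p q = Ioi b := by
  have hqp : 0 < q - p := sub_pos.2 hpq
  rw [← image_image (e + ·) (fun u => k / (u - p)), ← image_image (k / ·) (· - p),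
    image_sub_const_Ioo, sub_self, image_div_Ioo_zero hk hqp, image_const_add_Ioi, hb,
    mul_div_cancel_right₀ _ hqp.ne', add_sub_cancel]

lemma image_hyperbola_Ioi_of_pos (hk : 0 < k) (hpq : p < q) (hb : k = (b - e) * (q - p)) :
    (fun u => e + k / (u - p)) '' Ioi q = Ioo e b := by
  have hqp : 0 < q - p := sub_pos.2 hpq
  rw [← image_image (e + ·) (fun u => k / (u - p)), ← image_image (k / ·) (· - p),
    image_sub_const_Ioi, image_div_Ioi hk hqp, image_const_add_Ioo, hb,
    mul_div_cancel_right₀ _ hqp.ne', add_sub_cancel, add_zero]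

lemma image_hyperbola_Ioo_of_neg (hk : k < 0) (hqp : q < p) (hb : k = (b - e) * (q - p)) :
    (fun u => e + k / (u - p)) '' Ioo q p = Ioi b := by
  have h := image_hyperbola_Ioo_of_pos (e := e) (p := -p) (q := -q) (neg_pos.2 hk)
    (neg_lt_neg hqp) (by rw [hb]; ring)
  rw [← image_neg_Ioo, image_image] at h
  rw [← h]
  refine image_congr fun u _ => ?_
  rw [show -u - -p = -(u - p) by ring, neg_div_neg_eq]

lemma image_hyperbola_Ioi_of_neg (hk : k < 0) (hpq : p < q) (hb : k = (b - e) * (q - p)) :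
    (fun u => e + k / (u - p)) '' Ioi q = Ioo b e := by
  have h := image_hyperbola_Ioi_of_pos (e := -e) (b := -b) (neg_pos.2 hk) hpq (by rw [hb]; ring)
  have hneg : (fun u => e + k / (u - p)) = Neg.neg ∘ (fun u => -e + -k / (u - p)) := by
    funext u; simp only [Function.comp, neg_div]; ring
  rw [hneg, image_comp, h, image_neg_Ioo, neg_neg, neg_neg]

end Hyperbola

lemma mob_gam_apply (u : ℝ) : mob gam u = 2 + 2 * √2 - u := by
  simp [mob, gam]; ring

lemma mob_gam_involutive : Function.Involutive (mob gam) := by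
  intro u; simp only [mob_gam_apply]; ring

lemma image_mob_gam_Iio : mob gam '' Iio (1 + √2) = Ioi (1 + √2) := by
  rw [funext mob_gam_apply, image_const_sub_Iio]; ring_nf

lemma image_mob_gam_Ioi : mob gam '' Ioi (1 + √2) = Iio (1 + √2) := by
  rw [funext mob_gam_apply, image_const_sub_Ioi]; ring_nf

lemma sectorIndex_eq_of_mem_sInt {i : ℕ} (h1 : 1 ≤ i) (h7 : i ≤ 7) {u : ℝ} (hu : u ∈ sInt i) :
    sectorIndex u = i := by
  have := one_lt_sqrt_two
  have := sqrt_two_lt_three_halves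
  interval_cases i <;> simp only [sInt, mem_Ioo, mem_Iio] at hu <;> unfold sectorIndex <;>
    split_ifs <;> first | rfl | (exfalso; linarith [hu.1, hu.2]) | (exfalso; linarith)

lemma disjoint_sInt {i i' : ℕ} (h1 : 1 ≤ i) (h7 : i ≤ 7) (h1' : 1 ≤ i') (h7' : i' ≤ 7)
    (hne : i ≠ i') : Disjoint (sInt i) (sInt i') :=
  disjoint_left.2 fun _ hu hu' =>
    hne ((sectorIndex_eq_of_mem_sInt h1 h7 hu).symm.trans (sectorIndex_eq_of_mem_sInt h1' h7' hu'))

lemma sInt_subset_Iio {i : ℕ} (h1 : 1 ≤ i) (h7 : i ≤ 7) : sInt i ⊆ Iio (1 + √2) := by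
  have := one_lt_sqrt_two
  interval_cases i <;> intro u hu <;> simp only [sInt, mem_Ioo, mem_Iio] at hu ⊢ <;>
    first | linarith [hu.2] | linarith

lemma Iio_ae_le_Ioo_union_Iio (a b : ℝ) : Iio b ≤ᵐ[volume] (Ioo a b ∪ Iio a : Set ℝ) := by
  have h : Iio b ⊆ Ioo a b ∪ Iic a := fun _ hu => (Iio_subset_Iic_union_Ioo hu).symm
  exact h.eventuallyLE.trans (Filter.EventuallyLE.rfl.union Iio_ae_eq_Iic.symm.le)

lemma Iio_ae_le_iUnion_sInt : Iio (1 + √2) ≤ᵐ[volume] ⋃ i ∈ Finset.Icc 1 7, sInt i := by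
  have mem : ∀ {u : ℝ} (i : ℕ), i ∈ Finset.Icc 1 7 → u ∈ sInt i → u ∈ ⋃ i ∈ Finset.Icc 1 7, sInt i :=
    fun i hi hu => mem_iUnion₂.2 ⟨i, hi, hu⟩
  filter_upwards [Iio_ae_le_Ioo_union_Iio 1 (1 + √2), Iio_ae_le_Ioo_union_Iio (√2 - 1) 1,
    Iio_ae_le_Ioo_union_Iio 0 (√2 - 1), Iio_ae_le_Ioo_union_Iio (1 - √2) 0,
    Iio_ae_le_Ioo_union_Iio (-1) (1 - √2), Iio_ae_le_Ioo_union_Iio (-(1 + √2)) (-1)]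
    with u h₁ h₂ h₃ h₄ h₅ h₆ hu
  obtain hu | hu := h₁ hu; · exact mem 1 (by decide) hu
  obtain hu | hu := h₂ hu; · exact mem 2 (by decide) hu
  obtain hu | hu := h₃ hu; · exact mem 3 (by decide) hu
  obtain hu | hu := h₄ hu; · exact mem 4 (by decide) hu
  obtain hu | hu := h₅ hu; · exact mem 5 (by decide) hu
  obtain hu | hu := h₆ hu; · exact mem 6 (by decide) hu
  exact mem 7 (by decide) hu

lemma volume_Ioi_diff_iUnion_image_sInt :
    volume (Ioi (1 + √2) \ ⋃ i ∈ Finset.Icc 1 7, mob gam '' sInt i) = 0 := by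
  simp_rw [mob_gam_involutive.image_eq_preimage_symm]
  rw [← image_mob_gam_Iio, mob_gam_involutive.image_eq_preimage_symm, ← preimage_iUnion₂,
    ← preimage_sdiff, funext mob_gam_apply]
  exact (Measure.measurePreserving_sub_left volume _).quasiMeasurePreserving.preimage_null
    (ae_le_set.1 Iio_ae_le_iUnion_sInt)

lemma jmap_involutive : Function.Involutive jmap := by
  intro i; unfold jmap; split_ifs <;> omega

lemma jmap_bounds {i : ℕ} (h1 : 1 ≤ i) (h7 : i ≤ 7) : 1 ≤ jmap i ∧ jmap i ≤ 7 := by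
  unfold jmap; split_ifs <;> omega

lemma Fhat_eqOn_sInt_prod {i : ℕ} (h1 : 1 ≤ i) (h7 : i ≤ 7) :
    EqOn Fhat (fun z => (mob (gam * nu i) z.1, mob (gam * nu i) z.2)) (sInt i ×ˢ univ) := by
  intro z hz
  simp only [Fhat, sectorIndex_eq_of_mem_sInt h1 h7 hz.1, if_neg (by omega : i ≠ 0)]

lemma image_Fhat_sInt_prod_of_eqOn {i : ℕ} (h1 : 1 ≤ i) (h7 : i ≤ 7) {f : ℝ → ℝ}
    (hf : EqOn (mob (gam * nu i)) (mob gam ∘ f) (sInt i ∪ Ioi (1 + √2)))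
    (hinj : InjOn f (sInt i ∪ Ioi (1 + √2)))
    (himage : f '' sInt i = Ioi (1 + √2)) (himage' : f '' Ioi (1 + √2) = sInt (jmap i)) :
    Fhat '' (sInt i ×ˢ Ioi (1 + √2)) = Iio (1 + √2) ×ˢ (mob gam '' sInt (jmap i)) ∧
      InjOn Fhat (sInt i ×ˢ Ioi (1 + √2)) := by
  have hF : EqOn Fhat (Prod.map (mob gam ∘ f) (mob gam ∘ f)) (sInt i ×ˢ Ioi (1 + √2)) :=
    fun z hz => (Fhat_eqOn_sInt_prod h1 h7 ⟨hz.1, trivial⟩).trans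
      (Prod.ext (hf (Or.inl hz.1)) (hf (Or.inr hz.2)))
  have hinj' : InjOn (mob gam ∘ f) (sInt i ∪ Ioi (1 + √2)) :=
    mob_gam_involutive.injective.comp_injOn hinj
  refine ⟨?_, ?_⟩
  · rw [hF.image_eq, prodMap_image_prod, image_comp, image_comp, himage, himage',
      image_mob_gam_Ioi]
  · exact ((hinj'.mono subset_union_left).prodMap (hinj'.mono subset_union_right)).congr hF.symm

lemma image_Fhat_sInt_prod_of_hyperbola {i : ℕ} (h1 : 1 ≤ i) (h7 : i ≤ 7) {e k p : ℝ}
    (hk : k ≠ 0) (hp : p ∉ sInt i ∪ Ioi (1 + √2))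
    (hf : ∀ u ≠ p, mob (gam * nu i) u = mob gam (e + k / (u - p)))
    (himage : (fun u => e + k / (u - p)) '' sInt i = Ioi (1 + √2))
    (himage' : (fun u => e + k / (u - p)) '' Ioi (1 + √2) = sInt (jmap i)) :
    Fhat '' (sInt i ×ˢ Ioi (1 + √2)) = Iio (1 + √2) ×ˢ (mob gam '' sInt (jmap i)) ∧
      InjOn Fhat (sInt i ×ˢ Ioi (1 + √2)) :=
  have hp' : sInt i ∪ Ioi (1 + √2) ⊆ {p}ᶜ := fun _ hu hup => hp (hup ▸ hu)
  image_Fhat_sInt_prod_of_eqOn h1 h7 (fun u hu => hf u (hp' hu))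
    ((injOn_hyperbola hk).mono hp') himage himage'

section Isometries

variable {u : ℝ}

lemma mob_gam_mul_nu_one (hu : u ≠ 1) : mob (gam * nu 1) u = mob gam (1 + 2 / (u - 1)) := by
  have hden : 1 * u + -1 ≠ 0 := by contrapose! hu; linarith
  rw [nu, Matrix.mul_smul, mob_smul (by positivity), mob_mul hden, mob_of]
  congr 1
  rw [div_eq_iff hden]
  field_simp [sub_ne_zero.2 hu]
  ring

lemma mob_gam_mul_nu_two (hu : u ≠ 1) : mob (gam * nu 2) u = mob gam (-1 + -2 / (u - 1)) := by
  have hden : -1 * u + 1 ≠ 0 := by contrapose! hu; linarith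
  rw [nu, Matrix.mul_smul, mob_smul (by positivity), mob_mul hden, mob_of]
  congr 1
  rw [div_eq_iff hden]
  field_simp [sub_ne_zero.2 hu]
  ring

lemma mob_gam_mul_nu_three (hu : u ≠ 0) : mob (gam * nu 3) u = mob gam (0 + 1 / (u - 0)) := by
  have hden : 1 * u + 0 ≠ 0 := by simpa using hu
  rw [nu, mob_mul hden, mob_of]
  congr 1
  rw [div_eq_iff hden]
  field_simp
  ring

lemma mob_gam_mul_nu_four (hu : u ≠ 0) : mob (gam * nu 4) u = mob gam (0 + -1 / (u - 0)) := by
  have hden : -1 * u + 0 ≠ 0 := by simpa using hu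
  rw [nu, mob_mul hden, mob_of]
  congr 1
  rw [div_eq_iff hden]
  field_simp
  ring

lemma mob_gam_mul_nu_five (hu : u ≠ -1) : mob (gam * nu 5) u = mob gam (-1 + 2 / (u - -1)) := by
  have hden : 1 * u + 1 ≠ 0 := by contrapose! hu; linarith
  rw [nu, Matrix.mul_smul, mob_smul (by positivity), mob_mul hden, mob_of]
  congr 1
  rw [div_eq_iff hden]
  field_simp [sub_ne_zero.2 hu]
  ring

lemma mob_gam_mul_nu_six (hu : u ≠ -1) : mob (gam * nu 6) u = mob gam (1 + -2 / (u - -1)) := by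
  have hden : -1 * u + -1 ≠ 0 := by contrapose! hu; linarith
  rw [nu, Matrix.mul_smul, mob_smul (by positivity), mob_mul hden, mob_of]
  congr 1
  rw [div_eq_iff hden]
  field_simp [sub_ne_zero.2 hu]
  ring

lemma mob_gam_mul_nu_seven (u : ℝ) : mob (gam * nu 7) u = mob gam (-u) := by
  rw [nu, mob_mul (by simp), mob_of]
  simp

end Isometries

theorem image_Fhat_sInt_prod_Ioi {i : ℕ} (h1 : 1 ≤ i) (h7 : i ≤ 7) :
    Fhat '' (sInt i ×ˢ Ioi (1 + √2)) = Iio (1 + √2) ×ˢ (mob gam '' sInt (jmap i)) ∧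
      InjOn Fhat (sInt i ×ˢ Ioi (1 + √2)) := by
  have h₁ := one_lt_sqrt_two
  have h₂ := sqrt_two_lt_three_halves
  have h₃ : √2 ^ 2 = 2 := sq_sqrt zero_le_two
  interval_cases i
  · exact image_Fhat_sInt_prod_of_hyperbola h1 h7 two_ne_zero (by simp [sInt])
      (fun _ => mob_gam_mul_nu_one)
      (image_hyperbola_Ioo_of_pos two_pos (by linarith) (by linarith))
      (image_hyperbola_Ioi_of_pos two_pos (by linarith) (by linarith))
  · exact image_Fhat_sInt_prod_of_hyperbola h1 h7 (by norm_num) (by simp [sInt])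
      (fun _ => mob_gam_mul_nu_two)
      (image_hyperbola_Ioo_of_neg (by norm_num) (by linarith) (by linarith))
      (image_hyperbola_Ioi_of_neg (by norm_num) (by linarith) (by linarith))
  · exact image_Fhat_sInt_prod_of_hyperbola h1 h7 one_ne_zero (by simp [sInt]; linarith)
      (fun _ => mob_gam_mul_nu_three)
      (image_hyperbola_Ioo_of_pos one_pos (by linarith) (by linarith))
      (image_hyperbola_Ioi_of_pos one_pos (by linarith) (by linarith))
  · exact image_Fhat_sInt_prod_of_hyperbola h1 h7 (by norm_num) (by simp [sInt]; linarith)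
      (fun _ => mob_gam_mul_nu_four)
      (image_hyperbola_Ioo_of_neg (by norm_num) (by linarith) (by linarith))
      (image_hyperbola_Ioi_of_neg (by norm_num) (by linarith) (by linarith))
  · exact image_Fhat_sInt_prod_of_hyperbola h1 h7 two_ne_zero (by simp [sInt]; linarith)
      (fun _ => mob_gam_mul_nu_five)
      (image_hyperbola_Ioo_of_pos two_pos (by linarith) (by linarith))
      (image_hyperbola_Ioi_of_pos two_pos (by linarith) (by linarith))
  · exact image_Fhat_sInt_prod_of_hyperbola h1 h7 (by norm_num) (by simp [sInt]; linarith)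
      (fun _ => mob_gam_mul_nu_six)
      (image_hyperbola_Ioo_of_neg (by norm_num) (by linarith) (by linarith))
      (image_hyperbola_Ioi_of_neg (by norm_num) (by linarith) (by linarith))
  · refine image_Fhat_sInt_prod_of_eqOn h1 h7 (fun u _ => mob_gam_mul_nu_seven u)
      neg_injective.injOn ?_ ?_
    · rw [show sInt 7 = Iio (-(1 + √2)) from rfl, image_neg_Iio, neg_neg]
    · exact image_neg_Ioi _

lemma volume_rect_diff_iUnion_image_Fhat :
    volume ((Iio (1 + √2) ×ˢ Ioi (1 + √2)) \
      ⋃ i ∈ Finset.Icc 1 7, Fhat '' (sInt i ×ˢ Ioi (1 + √2))) = 0 := by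
  refine measure_mono_null (t := univ ×ˢ
    (Ioi (1 + √2) \ ⋃ i ∈ Finset.Icc 1 7, mob gam '' sInt i)) ?_ ?_
  · rintro ⟨x, y⟩ ⟨⟨hx, hy⟩, hnot⟩
    refine ⟨trivial, hy, fun hmem => hnot ?_⟩
    obtain ⟨i, hi, hyi⟩ := mem_iUnion₂.1 hmem
    obtain ⟨h1, h7⟩ := Finset.mem_Icc.1 hi
    obtain ⟨hj1, hj7⟩ := jmap_bounds h1 h7
    refine mem_iUnion₂.2 ⟨jmap i, Finset.mem_Icc.2 ⟨hj1, hj7⟩, ?_⟩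
    rw [(image_Fhat_sInt_prod_Ioi hj1 hj7).1, jmap_involutive]
    exact ⟨hx, hyi⟩
  · rw [Measure.volume_eq_prod, Measure.prod_prod, volume_Ioi_diff_iUnion_image_sInt, mul_zero]

/-- For each `i ∈ {1,…,7}`, the image of `int(Σᵢ) × (1+√2, ∞)` under `F̂` is
`(-∞, 1+√2) × γ[int(Σ_{j(i)})]`, with `γ[int(Σ_{j(i)})] ⊆ (1+√2, ∞)`; `F̂` is injective
on each of these rectangles, the seven images are pairwise disjoint, and their union fills
`(-∞, 1+√2) × (1+√2, ∞)` up to a Lebesgue-null set. -/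
theorem Fhat_image_rectangles :
    (∀ i : ℕ, 1 ≤ i → i ≤ 7 →
      Fhat '' (sInt i ×ˢ Set.Ioi (1 + Real.sqrt 2)) =
        Set.Iio (1 + Real.sqrt 2) ×ˢ (mob gam '' sInt (jmap i)) ∧
      mob gam '' sInt (jmap i) ⊆ Set.Ioi (1 + Real.sqrt 2) ∧
      Set.InjOn Fhat (sInt i ×ˢ Set.Ioi (1 + Real.sqrt 2))) ∧
    (∀ i i' : ℕ, 1 ≤ i → i ≤ 7 → 1 ≤ i' → i' ≤ 7 → i ≠ i' →
      Disjoint (Fhat '' (sInt i ×ˢ Set.Ioi (1 + Real.sqrt 2)))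
        (Fhat '' (sInt i' ×ˢ Set.Ioi (1 + Real.sqrt 2)))) ∧
    volume ((Set.Iio (1 + Real.sqrt 2) ×ˢ Set.Ioi (1 + Real.sqrt 2)) \
      ⋃ i ∈ Finset.Icc 1 7, Fhat '' (sInt i ×ˢ Set.Ioi (1 + Real.sqrt 2))) = 0 := by
  refine ⟨fun i h1 h7 => ?_, fun i i' h1 h7 h1' h7' hne => ?_, ?_⟩
  · obtain ⟨hj1, hj7⟩ := jmap_bounds h1 h7
    refine ⟨(image_Fhat_sInt_prod_Ioi h1 h7).1, ?_, (image_Fhat_sInt_prod_Ioi h1 h7).2⟩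
    exact image_mob_gam_Iio ▸ image_mono (sInt_subset_Iio hj1 hj7)
  · obtain ⟨hj1, hj7⟩ := jmap_bounds h1 h7
    obtain ⟨hj1', hj7'⟩ := jmap_bounds h1' h7'
    rw [(image_Fhat_sInt_prod_Ioi h1 h7).1, (image_Fhat_sInt_prod_Ioi h1' h7').1]
    exact disjoint_prod.2 <| Or.inr <| (disjoint_image_iff mob_gam_involutive.injective).2 <|
      disjoint_sInt hj1 hj7 hj1' hj7' (jmap_involutive.injective.ne hne)
  · exact volume_rect_diff_iUnion_image_Fhat
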